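/- (Orbits hitting a subvariety along arithmetic progressions) Let F: Z_p^n → Z_p^n be analytic with an orbit uniformization: there exist N ≥ 1 and, for each residue 0 ≤ i < N, an analytic map θ_i: Z_p → Z_p^n with θ_i(k) = F^{∘(Nk+i)}(x) for all k ∈ N, for a fixed x ∈ Z_p^n. Let V ⊆ Z_p^n be the zero set of finitely many polynomials. Then {m ∈ N : F^{∘m}(x) ∈ V} is the union of a finite set and finitely many arithmetic progressions with common difference N. -/

import Mathlib

/-!
A power series `∑ bₖ tᵏ` over `ℚ_p` with `bₖ → 0` converges on `ℤ_p`, and these restricted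
series form a ring, so `k ↦ P(θᵢ(k))` is again given by one. Such a series is either zero or has
only finitely many zeros in `ℤ_p` (Strassmann): by compactness infinitely many zeros accumulate at
some `a ∈ ℤ_p`; since the norm is ultrametric the Taylor expansion at `a` still converges on all
of `ℤ_p`, so by the principle of isolated zeros it vanishes, and then so does the series.
Hence along each residue class `i mod N` the return times are either all of the class or finite.
-/

open Filter Topology Metric Finset PowerSeries

section Ultrametric

variable {M : Type*} [NormedAddCommGroup M] [IsUltrametricDist M]

theorem tendsto_tsum_fiber_of_tendsto_cofinite {α β : Type*} {h : α × β → M}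
    (hh : Tendsto h cofinite (𝓝 0)) : Tendsto (fun j => ∑' i, h (i, j)) cofinite (𝓝 0) := by
  rw [NormedAddGroup.tendsto_nhds_zero] at hh ⊢
  intro ε hε
  have hfin := eventually_cofinite.mp (hh (ε / 2) (half_pos hε))
  refine eventually_cofinite.mpr ((hfin.image Prod.snd).subset fun j hj => ?_)
  by_contra hj'
  refine hj (lt_of_le_of_lt (IsUltrametricDist.norm_tsum_le_of_forall_le_of_nonneg
    (half_pos hε).le fun i => ?_) (half_lt_self hε))
  by_contra hi
  exact hj' ⟨(i, j), fun h' => hi h'.le, rfl⟩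

end Ultrametric

theorem Summable.tsum_eq_tsum_sum_antidiagonal {α A : Type*} [AddCommMonoid α]
    [TopologicalSpace α] [ContinuousAdd α] [T3Space α] [AddCommMonoid A] [HasAntidiagonal A] {G : A × A → α}
    (hG : Summable G) : ∑' q, G q = ∑' n, ∑ q ∈ antidiagonal n, G q := by
  simp_rw [← Finset.sum_finset_coe (f := G), ← tsum_fintype (L := .unconditional _)]
  rw [← HasAntidiagonal.sigmaAntidiagonalEquivProd.tsum_eq G]
  exact ((HasAntidiagonal.sigmaAntidiagonalEquivProd.summable_iff.mpr hG).tsum_sigma'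
    fun n => (hasSum_fintype _).summable)

namespace PowerSeries

theorem isRestricted_one_iff {R : Type*} [NormedRing R] (f : R⟦X⟧) :
    IsRestricted 1 f ↔ Tendsto (fun n => coeff n f) cofinite (𝓝 0) := by
  simp [isRestricted_iff, tendsto_zero_iff_norm_tendsto_zero]

theorem isRestricted_aeval {R σ : Type*} [NormedCommRing R] [IsUltrametricDist R]
    {b : σ → R⟦X⟧} (hb : ∀ j, IsRestricted 1 (b j))
    (P : MvPolynomial σ R) : IsRestricted 1 (MvPolynomial.aeval b P) := by
  induction P using MvPolynomial.induction_on with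
  | C r => simpa using isRestricted_C 1 r
  | add P Q hP hQ => simpa using isRestricted.add 1 hP hQ
  | mul_X P j hP => simpa using isRestricted.mul 1 hP (hb j)

section Evaluation

variable {K : Type*} [NontriviallyNormedField K] {f g : K⟦X⟧}

-- Meaningful for restricted `f` and `‖t‖ ≤ 1`; elsewhere the sum may diverge and is then `0`.
noncomputable def restrictedEval (f : K⟦X⟧) (t : K) : K := ∑' n, coeff n f * t ^ n

theorem IsRestricted.tendsto_coeff_mul_pow (hf : IsRestricted 1 f) {t : K} (ht : ‖t‖ ≤ 1) :
    Tendsto (fun n => coeff n f * t ^ n) cofinite (𝓝 0) := by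
  refine squeeze_zero_norm (fun n => ?_) ((tendsto_zero_iff_norm_tendsto_zero).mp
    ((isRestricted_one_iff f).mp hf))
  rw [norm_mul, norm_pow]
  exact mul_le_of_le_one_right (norm_nonneg _) (pow_le_one₀ (norm_nonneg _) ht)

@[simp]
theorem restrictedEval_zero (t : K) : restrictedEval 0 t = 0 := by
  simp [restrictedEval]

@[simp]
theorem restrictedEval_C (r : K) (t : K) : restrictedEval (C r) t = r := by
  rw [restrictedEval, tsum_eq_single 0 fun n hn => by simp [coeff_C, hn]]
  simp

variable [CompleteSpace K]

open FormalMultilinearSeries in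
theorem IsRestricted.hasFPowerSeriesAt (hf : IsRestricted 1 f) :
    HasFPowerSeriesAt (restrictedEval f) (ofScalars K fun n => coeff n f) 0 := by
  have hradius : ((1 : NNReal) : ENNReal) ≤ (ofScalars K fun n => coeff n f).radius :=
    le_radius_of_tendsto _ (l := 0) <| by
      simpa [ofScalars_norm, Nat.cofinite_eq_atTop] using
        tendsto_zero_iff_norm_tendsto_zero.mp ((isRestricted_one_iff f).mp hf)
  have hball := (ofScalars K fun n => coeff n f).hasFPowerSeriesOnBall
    (lt_of_lt_of_le (by simp) hradius)
  convert hball.hasFPowerSeriesAt using 1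
  funext t
  exact (ofScalars_sum_eq (E := K) (fun n => coeff n f) t).symm

theorem IsRestricted.eq_zero_of_frequently_eq_zero (hf : IsRestricted 1 f)
    (h : ∃ᶠ u in 𝓝[≠] 0, restrictedEval f u = 0) : f = 0 := by
  by_contra hf0
  have hne : (FormalMultilinearSeries.ofScalars K fun n => coeff n f) ≠ 0 := by
    rw [Ne, FormalMultilinearSeries.ofScalars_series_eq_zero]
    exact fun hc => hf0 (ext fun n => by simpa using congrFun hc n)
  obtain ⟨u, hu, hu'⟩ := (h.and_eventually (hf.hasFPowerSeriesAt.locally_ne_zero hne)).exists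
  exact hu' hu

variable [IsUltrametricDist K]

theorem IsRestricted.summable_coeff_mul_pow (hf : IsRestricted 1 f) {t : K} (ht : ‖t‖ ≤ 1) :
    Summable fun n => coeff n f * t ^ n :=
  NonarchimedeanAddGroup.summable_of_tendsto_cofinite_zero (hf.tendsto_coeff_mul_pow ht)

theorem restrictedEval_add (hf : IsRestricted 1 f) (hg : IsRestricted 1 g) {t : K}
    (ht : ‖t‖ ≤ 1) : restrictedEval (f + g) t = restrictedEval f t + restrictedEval g t := by
  simp only [restrictedEval, map_add, add_mul]
  exact (hf.summable_coeff_mul_pow ht).tsum_add (hg.summable_coeff_mul_pow ht)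

theorem restrictedEval_mul (hf : IsRestricted 1 f) (hg : IsRestricted 1 g) {t : K}
    (ht : ‖t‖ ≤ 1) : restrictedEval (f * g) t = restrictedEval f t * restrictedEval g t := by
  have hfg := NonarchimedeanAddGroup.summable_of_tendsto_cofinite_zero
    (tendsto_mul_cofinite_nhds_zero (hf.tendsto_coeff_mul_pow ht) (hg.tendsto_coeff_mul_pow ht))
  unfold restrictedEval
  rw [(hf.summable_coeff_mul_pow ht).tsum_mul_tsum_eq_tsum_sum_antidiagonal
      (hg.summable_coeff_mul_pow ht) hfg]
  refine tsum_congr fun n => ?_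
  rw [coeff_mul, Finset.sum_mul]
  refine Finset.sum_congr rfl fun q hq => ?_
  rw [← mem_antidiagonal.mp hq, pow_add]
  ring

theorem restrictedEval_aeval {σ : Type*} {b : σ → K⟦X⟧} (hb : ∀ j, IsRestricted 1 (b j))
    (P : MvPolynomial σ K) {t : K} (ht : ‖t‖ ≤ 1) :
    restrictedEval (MvPolynomial.aeval b P) t =
      MvPolynomial.eval (fun j => restrictedEval (b j) t) P := by
  induction P using MvPolynomial.induction_on with
  | C r => simp
  | add P Q hP hQ =>
    rw [map_add, restrictedEval_add (isRestricted_aeval hb P) (isRestricted_aeval hb Q) ht,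
      hP, hQ, map_add]
  | mul_X P j hP =>
    rw [map_mul, restrictedEval_mul (isRestricted_aeval hb P) (by simpa using hb j) ht, hP]
    simp

theorem IsRestricted.exists_restrictedEval_add_eq (hf : IsRestricted 1 f) {a : K}
    (ha : ‖a‖ ≤ 1) : ∃ g : K⟦X⟧, IsRestricted 1 g ∧
      ∀ u : K, ‖u‖ ≤ 1 → restrictedEval f (a + u) = restrictedEval g u := by
  -- `h (i, j)` is the coefficient of `a ^ i * u ^ j` in `coeff (i + j) f * (a + u) ^ (i + j)`;
  -- summing over `i` gives the Taylor coefficients of `f` at `a`.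
  set h : ℕ × ℕ → K := fun q => coeff (q.1 + q.2) f * ((q.1 + q.2).choose q.1 : K) * a ^ q.1
  have hh : Tendsto h cofinite (𝓝 0) := by
    have hadd : Tendsto (fun q : ℕ × ℕ => q.1 + q.2) cofinite cofinite :=
      Tendsto.cofinite_of_finite_preimage_singleton fun n =>
        ((antidiagonal n).finite_toSet.subset fun q hq => by simpa using hq).to_subtype
    refine squeeze_zero_norm (fun q => ?_) (tendsto_zero_iff_norm_tendsto_zero.mp
      (((isRestricted_one_iff f).mp hf).comp hadd))
    rw [norm_mul, norm_mul, norm_pow]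
    calc _ ≤ ‖coeff (q.1 + q.2) f‖ * 1 * 1 := by
          gcongr
          · exact IsUltrametricDist.norm_natCast_le_one K _
          · exact pow_le_one₀ (norm_nonneg a) ha
      _ = _ := by simp
  refine ⟨mk fun j => ∑' i, h (i, j), (isRestricted_one_iff _).mpr
    (by simpa using tendsto_tsum_fiber_of_tendsto_cofinite hh), fun u hu => ?_⟩
  have hG : Summable fun q : ℕ × ℕ => h q * u ^ q.2 := by
    refine NonarchimedeanAddGroup.summable_of_tendsto_cofinite_zero
      (squeeze_zero_norm (fun q => ?_) (tendsto_zero_iff_norm_tendsto_zero.mp hh))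
    rw [norm_mul, norm_pow]
    exact mul_le_of_le_one_right (norm_nonneg _) (pow_le_one₀ (norm_nonneg u) hu)
  have hG' := (Equiv.prodComm ℕ ℕ).summable_iff.mpr hG
  calc restrictedEval f (a + u) = ∑' n, ∑ q ∈ antidiagonal n, h q * u ^ q.2 := by
        refine tsum_congr fun n => ?_
        rw [(Commute.all a u).add_pow', Finset.mul_sum]
        refine Finset.sum_congr rfl fun q hq => ?_
        rw [← mem_antidiagonal.mp hq, nsmul_eq_mul]
        ring
    _ = ∑' q, h q * u ^ q.2 := hG.tsum_eq_tsum_sum_antidiagonal.symm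
    _ = ∑' j, ∑' i, h (i, j) * u ^ j := by
        rw [← (Equiv.prodComm ℕ ℕ).tsum_eq]
        exact hG'.tsum_prod' hG'.prod_factor
    _ = restrictedEval (mk fun j => ∑' i, h (i, j)) u := by
        simp only [restrictedEval, coeff_mk, tsum_mul_right]

theorem IsRestricted.eq_zero_of_infinite_zeros [ProperSpace K] (hf : IsRestricted 1 f)
    {s : Set K} (hs : s ⊆ closedBall 0 1) (hinf : s.Infinite)
    (hzero : ∀ t ∈ s, restrictedEval f t = 0) : f = 0 := by
  obtain ⟨a, ha, hacc⟩ := hinf.exists_accPt_of_subset_isCompact (isCompact_closedBall 0 1) hs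
  rw [mem_closedBall_zero_iff] at ha
  obtain ⟨g, hg, hfg⟩ := hf.exists_restrictedEval_add_eq ha
  have hunit : ∀ᶠ u in 𝓝 (0 : K), ‖u‖ ≤ 1 :=
    eventually_of_mem (closedBall_mem_nhds 0 one_pos) fun u hu => mem_closedBall_zero_iff.mp hu
  have hg0 : g = 0 := by
    refine hg.eq_zero_of_frequently_eq_zero (frequently_nhdsWithin_iff.mpr ?_)
    rw [accPt_iff_frequently, ← map_add_left_nhds_zero, frequently_map] at hacc
    refine (hacc.and_eventually hunit).mono fun u ⟨⟨hne, hmem⟩, hu⟩ => ⟨?_, ?_⟩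
    · rw [← hfg u hu, hzero _ hmem]
    · exact fun h0 => hne (by rw [Set.mem_singleton_iff.mp h0, add_zero])
  refine hf.eq_zero_of_frequently_eq_zero (Eventually.frequently ?_)
  refine eventually_nhdsWithin_of_eventually_nhds (hunit.mono fun t ht => ?_)
  have hta : ‖t - a‖ ≤ 1 := by
    simpa [sub_eq_add_neg] using
      (IsUltrametricDist.norm_add_le_max t (-a)).trans (max_le ht (by simpa using ha))
  rw [← add_sub_cancel a t, hfg _ hta, hg0, restrictedEval_zero]

end Evaluation

end PowerSeries

theorem exists_eq_finset_union_progressions {R : Set ℕ} {N : ℕ} (hN : 0 < N)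
    (h : ∀ i : Fin N, (∀ k, N * k + i ∈ R) ∨ {k | N * k + i ∈ R}.Finite) :
    ∃ (S : Finset ℕ) (I : Finset (Fin N)),
      R = ↑S ∪ ⋃ i ∈ I, {m : ℕ | ∃ k : ℕ, m = N * k + i} := by
  classical
  let I : Finset (Fin N) := univ.filter fun i => ∀ k, N * k + i ∈ R
  have hfin : (⋃ i ∈ (Iᶜ : Finset (Fin N)), (N * · + i) '' {k | N * k + i ∈ R}).Finite :=
    Set.Finite.biUnion (Iᶜ).finite_toSet fun i hi =>
      ((h i).resolve_left (by simpa [I] using hi)).image _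
  refine ⟨hfin.toFinset, I, Set.ext fun m => ?_⟩
  let i : Fin N := ⟨m % N, Nat.mod_lt m hN⟩
  have hm : m = N * (m / N) + i := (Nat.div_add_mod m N).symm
  simp only [Set.Finite.coe_toFinset, Set.mem_union, Set.mem_iUnion, Set.mem_image,
    Set.mem_ofPred_eq, exists_prop]
  constructor
  · intro hmR
    by_cases hi : i ∈ I
    · exact Or.inr ⟨i, hi, m / N, hm⟩
    · exact Or.inl ⟨i, by simpa using hi, m / N, hm ▸ hmR, hm.symm⟩
  · rintro (⟨j, -, k, hk, rfl⟩ | ⟨j, hj, k, rfl⟩)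
    · exact hk
    · exact (Finset.mem_filter.mp hj).2 k

/-- Orbits hitting a subvariety along arithmetic progressions: let `F : ℤ_p^n → ℤ_p^n`
be analytic with an orbit uniformization for the point `x`: there are `N ≥ 1` and, for
each residue `i < N`, a `p`-adic analytic map `θ_i : ℤ_p → ℚ_p^n` (given coordinatewise
by power series with coefficients tending to `0`) with `θ_i(k) = F^{∘(Nk+i)}(x)` for
all `k ∈ ℕ`.  If `V ⊆ ℤ_p^n` is the zero set of a finite set `Ps` of polynomials, then
`{m : F^{∘m}(x) ∈ V}` is the union of a finite set and finitely many arithmetic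
progressions with common difference `N`. -/
theorem return_times_arithmetic_progressions (p : ℕ) [Fact p.Prime] (n : ℕ)
    (F : (Fin n → ℤ_[p]) → (Fin n → ℤ_[p])) (x : Fin n → ℤ_[p])
    (N : ℕ) (hN : 0 < N)
    (θ : Fin N → ℤ_[p] → (Fin n → ℚ_[p]))
    (hanal : ∀ i : Fin N, ∃ b : ℕ → Fin n → ℚ_[p],
      (∀ j, Filter.Tendsto (fun k => ‖b k j‖) Filter.atTop (nhds 0)) ∧
      ∀ (t : ℤ_[p]) (j : Fin n), θ i t j = ∑' k : ℕ, b k j * (t : ℚ_[p]) ^ k)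
    (hθ : ∀ (i : Fin N) (k : ℕ) (j : Fin n),
      θ i (k : ℤ_[p]) j = ((F^[N * k + i] x j : ℤ_[p]) : ℚ_[p]))
    (Ps : Finset (MvPolynomial (Fin n) ℚ_[p])) :
    ∃ (S : Finset ℕ) (I : Finset (Fin N)),
      { m : ℕ | ∀ P ∈ Ps, MvPolynomial.eval (fun j => ((F^[m] x j : ℤ_[p]) : ℚ_[p])) P = 0 }
        = ↑S ∪ ⋃ i ∈ I, { m : ℕ | ∃ k : ℕ, m = N * k + i } := by
  refine exists_eq_finset_union_progressions hN fun i => ?_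
  obtain ⟨b, hb, hθb⟩ := hanal i
  let θser : Fin n → ℚ_[p]⟦X⟧ := fun j => mk fun k => b k j
  have hser : ∀ j, IsRestricted 1 (θser j) := fun j => by
    simpa [isRestricted_iff', θser] using hb j
  have hreturn : ∀ k : ℕ, (N * k + i ∈ { m : ℕ | ∀ P ∈ Ps,
      MvPolynomial.eval (fun j => ((F^[m] x j : ℤ_[p]) : ℚ_[p])) P = 0 }) ↔
      ∀ P ∈ Ps, restrictedEval (MvPolynomial.aeval θser P) (k : ℚ_[p]) = 0 := fun k => by
    have hk : ‖(k : ℚ_[p])‖ ≤ 1 := IsUltrametricDist.norm_natCast_le_one ℚ_[p] k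
    simp only [Set.mem_ofPred_eq, restrictedEval_aeval hser _ hk]
    simp [restrictedEval, θser, ← hθ, hθb]
  by_cases hall : ∀ P ∈ Ps, MvPolynomial.aeval θser P = 0
  · exact Or.inl fun k => (hreturn k).mpr fun P hP => by rw [hall P hP, restrictedEval_zero]
  · obtain ⟨P, hP, hP0⟩ := not_forall₂.mp hall
    refine Or.inr (Set.Finite.of_finite_image ?_ (Nat.cast_injective (R := ℚ_[p])).injOn)
    by_contra hinf
    refine hP0 ((isRestricted_aeval hser P).eq_zero_of_infinite_zeros ?_ hinf ?_)
    · rintro _ ⟨k, -, rfl⟩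
      simpa using IsUltrametricDist.norm_natCast_le_one ℚ_[p] k
    · rintro _ ⟨k, hk, rfl⟩
      exact (hreturn k).mp hk P hP
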